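/- Let q₁, q₂, q₃ be pairwise coprime positive integers and let l_j, l_j' ∈ {0,1,…,q_j-1} for j=1,2,3. Set ρ^j_m = e^{2πi m/q_j}. If the 3×3 determinant with rows (1,1,1), (ρ¹_{l₁}, ρ²_{l₂}, ρ³_{l₃}), (ρ¹_{l₁'}, ρ²_{l₂'}, ρ³_{l₃'}) vanishes, then one of the following holds: (a) l₁=l₂=l₃=0; (b) l₁'=l₂'=l₃'=0; (c) l₁=l₁', l₂=l₂', l₃=l₃'; (d) l₁=l₁'=0 and l₂=l₂'=0; (e) l₁=l₁'=0 and l₃=l₃'=0; (f) l₂=l₂'=0 and l₃=l₃'=0. -/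

import Mathlib

open Complex

noncomputable def ee (q : ℕ) (m : ℤ) : ℂ := Complex.exp (2 * Real.pi * Complex.I * m / q)

lemma ee_ne_zero (q : ℕ) (m : ℤ) : ee q m ≠ 0 := Complex.exp_ne_zero _

lemma ee_eq_one_iff (q : ℕ) (hq : 0 < q) (m : ℤ) : ee q m = 1 ↔ (q:ℤ) ∣ m := by
  rw [ee, Complex.exp_eq_one_iff]
  have hq' : (q:ℂ) ≠ 0 := Nat.cast_ne_zero.mpr hq.ne'
  have h2 : (2 * Real.pi * Complex.I : ℂ) ≠ 0 := by
    simp [Real.pi_ne_zero, Complex.I_ne_zero]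
  constructor
  · rintro ⟨n, hn⟩
    refine ⟨n, ?_⟩
    have hn' : (2 * Real.pi * Complex.I) * (m:ℂ) = (2 * Real.pi * Complex.I) * ((q:ℂ)*n) := by
      field_simp at hn; linear_combination (2 * Real.pi * Complex.I) * hn
    have := mul_left_cancel₀ h2 hn'
    exact_mod_cast this
  · rintro ⟨n, rfl⟩
    exact ⟨n, by push_cast; rw [mul_div_assoc, mul_div_cancel_left₀ _ hq']; ring⟩

lemma ee_mul (q : ℕ) (m m' : ℤ) : ee q m * ee q m' = ee q (m + m') := by
  rw [ee, ee, ee, ← Complex.exp_add]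
  congr 1; push_cast; ring

lemma ee_pow (q : ℕ) (m : ℤ) (n : ℕ) : ee q m ^ n = ee q (n * m) := by
  rw [ee, ee, ← Complex.exp_nat_mul]
  congr 1; push_cast; ring

lemma ee_pow_self (q : ℕ) (hq : 0 < q) (m : ℤ) : ee q m ^ q = 1 := by
  rw [ee_pow, ee_eq_one_iff q hq]; exact Dvd.intro m rfl

lemma ee_conj (q : ℕ) (m : ℤ) : (starRingEnd ℂ) (ee q m) = (ee q m)⁻¹ := by
  rw [ee, ← Complex.exp_conj, ← Complex.exp_neg]
  congr 1
  simp [map_div₀, map_mul, Complex.conj_I, map_ofNat]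
  ring

lemma ee_mul_conj (q : ℕ) (m : ℤ) : ee q m * (starRingEnd ℂ) (ee q m) = 1 := by
  rw [ee_conj, mul_inv_cancel₀ (ee_ne_zero _ _)]

lemma ee_inj (q : ℕ) (hq : 0 < q) (l l' : ℕ) (hl : l < q) (hl' : l' < q)
    (h : ee q l = ee q l') : l = l' := by
  have h1 : ee q l * ee q (-l') = 1 := by
    rw [h, ee_mul q, add_neg_cancel]
    rw [ee_eq_one_iff q hq]
    exact dvd_zero _
  rw [ee_mul q, ee_eq_one_iff q hq] at h1
  have := Int.eq_zero_of_dvd_of_natAbs_lt_natAbs h1 (by omega)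
  omega

lemma ee_eq_one_small (q l : ℕ) (hq : 0 < q) (hl : l < q) (h : ee q (l:ℤ) = 1) : l = 0 := by
  have h1 := (ee_eq_one_iff q hq l).mp h
  have := Int.eq_zero_of_dvd_of_natAbs_lt_natAbs h1 (by omega)
  omega

lemma eq_one_of_pow_coprime (x : ℂ) (q q' : ℕ) (hq : 0 < q)
    (hc : Nat.Coprime q q') (h1 : x ^ q = 1) (h2 : x ^ q' = 1) : x = 1 := by
  have hx : x ≠ 0 := by
    intro h; rw [h, zero_pow hq.ne'] at h1; exact one_ne_zero h1.symm
  have hcop : IsCoprime (q:ℤ) (q':ℤ) := Int.isCoprime_iff_gcd_eq_one.mpr (by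
    simpa [Int.gcd] using hc)
  obtain ⟨u, v, huv⟩ := hcop
  calc x = x ^ (u * q + v * q' : ℤ) := by rw [huv, zpow_one]
  _ = (x ^ (q:ℤ)) ^ u * (x ^ (q':ℤ)) ^ v := by
      rw [zpow_add₀ hx, mul_comm u, mul_comm v, zpow_mul, zpow_mul]
  _ = 1 := by
      rw [zpow_natCast, zpow_natCast, h1, h2, one_zpow, one_zpow, one_mul]

/-- Vandermonde-type lemma for pairwise coprime periods (Lemma 3.5 of the paper). -/
theorem det_roots_of_unity_eq_zero_cases (q₁ q₂ q₃ : ℕ)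
    (hq₁ : 0 < q₁) (hq₂ : 0 < q₂) (hq₃ : 0 < q₃)
    (h12 : Nat.Coprime q₁ q₂) (h13 : Nat.Coprime q₁ q₃) (h23 : Nat.Coprime q₂ q₃)
    (l₁ l₂ l₃ l₁' l₂' l₃' : ℕ)
    (hl₁ : l₁ < q₁) (hl₂ : l₂ < q₂) (hl₃ : l₃ < q₃)
    (hl₁' : l₁' < q₁) (hl₂' : l₂' < q₂) (hl₃' : l₃' < q₃)
    (ρ : ℕ → ℕ → ℂ)
    (hρ : ∀ q m, ρ q m = Complex.exp (2 * Real.pi * Complex.I * m / q))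
    (hdet : Matrix.det
      !![(1 : ℂ), 1, 1;
         ρ q₁ l₁, ρ q₂ l₂, ρ q₃ l₃;
         ρ q₁ l₁', ρ q₂ l₂', ρ q₃ l₃'] = 0) :
    (l₁ = 0 ∧ l₂ = 0 ∧ l₃ = 0) ∨
    (l₁' = 0 ∧ l₂' = 0 ∧ l₃' = 0) ∨
    (l₁ = l₁' ∧ l₂ = l₂' ∧ l₃ = l₃') ∨
    (l₁ = 0 ∧ l₁' = 0 ∧ l₂ = 0 ∧ l₂' = 0) ∨
    (l₁ = 0 ∧ l₁' = 0 ∧ l₃ = 0 ∧ l₃' = 0) ∨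
    (l₂ = 0 ∧ l₂' = 0 ∧ l₃ = 0 ∧ l₃' = 0) := by
  have hρ' : ∀ q m : ℕ, ρ q m = ee q (m : ℤ) := by
    intro q m; rw [hρ, ee]; norm_num
  simp only [hρ'] at hdet
  set a1 := ee q₁ (l₁ : ℤ) with ha1d
  set a2 := ee q₂ (l₂ : ℤ) with ha2d
  set a3 := ee q₃ (l₃ : ℤ) with ha3d
  set b1 := ee q₁ (l₁' : ℤ) with hb1d
  set b2 := ee q₂ (l₂' : ℤ) with hb2d
  set b3 := ee q₃ (l₃' : ℤ) with hb3d
  have pa1 : a1 ^ q₁ = 1 := ee_pow_self q₁ hq₁ _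
  have pa2 : a2 ^ q₂ = 1 := ee_pow_self q₂ hq₂ _
  have pa3 : a3 ^ q₃ = 1 := ee_pow_self q₃ hq₃ _
  have pb1 : b1 ^ q₁ = 1 := ee_pow_self q₁ hq₁ _
  have pb2 : b2 ^ q₂ = 1 := ee_pow_self q₂ hq₂ _
  have pb3 : b3 ^ q₃ = 1 := ee_pow_self q₃ hq₃ _
  have na1 : a1 ≠ 0 := ee_ne_zero _ _
  have na2 : a2 ≠ 0 := ee_ne_zero _ _
  have na3 : a3 ≠ 0 := ee_ne_zero _ _
  have nb1 : b1 ≠ 0 := ee_ne_zero _ _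
  have nb2 : b2 ≠ 0 := ee_ne_zero _ _
  have nb3 : b3 ≠ 0 := ee_ne_zero _ _
  obtain ⟨v, hv0, hvM⟩ := Matrix.exists_vecMul_eq_zero_iff.mpr hdet
  set α := v 0 with hαd
  set β := v 1 with hβd
  set γ := v 2 with hγd
  have E1 := congrFun hvM 0
  have E2 := congrFun hvM 1
  have E3 := congrFun hvM 2
  simp [Matrix.vecMul, dotProduct, Fin.sum_univ_three] at E1 E2 E3
  have e1 : α + β * a1 + γ * b1 = 0 := by linear_combination E1
  have e2 : α + β * a2 + γ * b2 = 0 := by linear_combination E2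
  have e3 : α + β * a3 + γ * b3 = 0 := by linear_combination E3
  by_cases hγ0 : γ = 0
  · by_cases hβ0 : β = 0
    · exfalso
      have hα0 : α = 0 := by linear_combination e1 - a1 * hβ0 - b1 * hγ0
      apply hv0
      funext i
      fin_cases i <;> simp_all
    · -- case (a): a1 = a2 = a3 = 1
      have h12e : a1 = a2 := mul_left_cancel₀ hβ0 (by linear_combination e1 - e2 + (b2 - b1) * hγ0)
      have h13e : a1 = a3 := mul_left_cancel₀ hβ0 (by linear_combination e1 - e3 + (b3 - b1) * hγ0)
      have ha1 : a1 = 1 := eq_one_of_pow_coprime a1 q₁ q₂ hq₁ h12 pa1 (by rw [h12e]; exact pa2)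
      have ha2 : a2 = 1 := by rw [← h12e]; exact ha1
      have ha3 : a3 = 1 := by rw [← h13e]; exact ha1
      exact Or.inl ⟨ee_eq_one_small q₁ l₁ hq₁ hl₁ ha1, ee_eq_one_small q₂ l₂ hq₂ hl₂ ha2,
        ee_eq_one_small q₃ l₃ hq₃ hl₃ ha3⟩
  · by_cases hβ0 : β = 0
    · -- case (b): b1 = b2 = b3 = 1
      have h12e : b1 = b2 := mul_left_cancel₀ hγ0 (by linear_combination e1 - e2 + (a2 - a1) * hβ0)
      have h13e : b1 = b3 := mul_left_cancel₀ hγ0 (by linear_combination e1 - e3 + (a3 - a1) * hβ0)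
      have hb1 : b1 = 1 := eq_one_of_pow_coprime b1 q₁ q₂ hq₁ h12 pb1 (by rw [h12e]; exact pb2)
      have hb2 : b2 = 1 := by rw [← h12e]; exact hb1
      have hb3 : b3 = 1 := by rw [← h13e]; exact hb1
      exact Or.inr (Or.inl ⟨ee_eq_one_small q₁ l₁' hq₁ hl₁' hb1,
        ee_eq_one_small q₂ l₂' hq₂ hl₂' hb2, ee_eq_one_small q₃ l₃' hq₃ hl₃' hb3⟩)
    · by_cases hα0 : α = 0
      · -- case (c): a_j = b_j
        have h12ab : a1 * b2 = a2 * b1 :=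
          mul_left_cancel₀ hβ0 (by linear_combination b2 * e1 - b1 * e2 + (b1 - b2) * hα0)
        have h13ab : a1 * b3 = a3 * b1 :=
          mul_left_cancel₀ hβ0 (by linear_combination b3 * e1 - b1 * e3 + (b1 - b3) * hα0)
        have rq1 : (a1 * b1⁻¹) ^ q₁ = 1 := by rw [mul_pow, inv_pow, pa1, pb1]; norm_num
        have r12 : a1 * b1⁻¹ = a2 * b2⁻¹ := by
          field_simp
          linear_combination h12ab
        have r13 : a1 * b1⁻¹ = a3 * b3⁻¹ := by
          field_simp
          linear_combination h13ab
        have rq2 : (a1 * b1⁻¹) ^ q₂ = 1 := by rw [r12, mul_pow, inv_pow, pa2, pb2]; norm_num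
        have r1 : a1 * b1⁻¹ = 1 := eq_one_of_pow_coprime _ q₁ q₂ hq₁ h12 rq1 rq2
        have hab1 : a1 = b1 := (mul_inv_eq_one₀ nb1).mp r1
        have hab2 : a2 = b2 := (mul_inv_eq_one₀ nb2).mp (by rw [← r12]; exact r1)
        have hab3 : a3 = b3 := (mul_inv_eq_one₀ nb3).mp (by rw [← r13]; exact r1)
        exact Or.inr (Or.inr (Or.inl ⟨ee_inj q₁ hq₁ l₁ l₁' hl₁ hl₁' hab1,
          ee_inj q₂ hq₂ l₂ l₂' hl₂ hl₂' hab2, ee_inj q₃ hq₃ l₃ l₃' hl₃ hl₃' hab3⟩))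
      · -- all coefficients nonzero
        by_cases h12a : a1 = a2
        · have ha1 : a1 = 1 := eq_one_of_pow_coprime a1 q₁ q₂ hq₁ h12 pa1 (by rw [h12a]; exact pa2)
          have ha2 : a2 = 1 := by rw [← h12a]; exact ha1
          have hb12 : b1 = b2 := mul_left_cancel₀ hγ0 (by linear_combination e1 - e2 - β * h12a)
          have hb1 : b1 = 1 := eq_one_of_pow_coprime b1 q₁ q₂ hq₁ h12 pb1 (by rw [hb12]; exact pb2)
          have hb2 : b2 = 1 := by rw [← hb12]; exact hb1
          exact Or.inr (Or.inr (Or.inr (Or.inl ⟨ee_eq_one_small q₁ l₁ hq₁ hl₁ ha1,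
            ee_eq_one_small q₁ l₁' hq₁ hl₁' hb1, ee_eq_one_small q₂ l₂ hq₂ hl₂ ha2,
            ee_eq_one_small q₂ l₂' hq₂ hl₂' hb2⟩)))
        · by_cases h13a : a1 = a3
          · have ha1 : a1 = 1 := eq_one_of_pow_coprime a1 q₁ q₃ hq₁ h13 pa1 (by rw [h13a]; exact pa3)
            have ha3 : a3 = 1 := by rw [← h13a]; exact ha1
            have hb13 : b1 = b3 := mul_left_cancel₀ hγ0 (by linear_combination e1 - e3 - β * h13a)
            have hb1 : b1 = 1 := eq_one_of_pow_coprime b1 q₁ q₃ hq₁ h13 pb1 (by rw [hb13]; exact pb3)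
            have hb3 : b3 = 1 := by rw [← hb13]; exact hb1
            exact Or.inr (Or.inr (Or.inr (Or.inr (Or.inl ⟨ee_eq_one_small q₁ l₁ hq₁ hl₁ ha1,
              ee_eq_one_small q₁ l₁' hq₁ hl₁' hb1, ee_eq_one_small q₃ l₃ hq₃ hl₃ ha3,
              ee_eq_one_small q₃ l₃' hq₃ hl₃' hb3⟩))))
          · by_cases h23a : a2 = a3
            · have ha2 : a2 = 1 := eq_one_of_pow_coprime a2 q₂ q₃ hq₂ h23 pa2 (by rw [h23a]; exact pa3)
              have ha3 : a3 = 1 := by rw [← h23a]; exact ha2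
              have hb23 : b2 = b3 := mul_left_cancel₀ hγ0 (by linear_combination e2 - e3 - β * h23a)
              have hb2 : b2 = 1 := eq_one_of_pow_coprime b2 q₂ q₃ hq₂ h23 pb2 (by rw [hb23]; exact pb3)
              have hb3 : b3 = 1 := by rw [← hb23]; exact hb2
              exact Or.inr (Or.inr (Or.inr (Or.inr (Or.inr ⟨ee_eq_one_small q₂ l₂ hq₂ hl₂ ha2,
                ee_eq_one_small q₂ l₂' hq₂ hl₂' hb2, ee_eq_one_small q₃ l₃ hq₃ hl₃ ha3,
                ee_eq_one_small q₃ l₃' hq₃ hl₃' hb3⟩))))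
            · -- all a's distinct: contradiction via quadratic
              exfalso
              set cα := (starRingEnd ℂ) α with hcαd
              set cβ := (starRingEnd ℂ) β with hcβd
              set cγ := (starRingEnd ℂ) γ with hcγd
              have key : ∀ (x y : ℂ), x * (starRingEnd ℂ) x = 1 → y * (starRingEnd ℂ) y = 1 →
                  α + β * x + γ * y = 0 →
                  cα * β * x ^ 2 + (cα * α + cβ * β - cγ * γ) * x + α * cβ = 0 := by
                intro x y hxx hyy hline
                have hc := congrArg (starRingEnd ℂ) hline
                simp only [map_add, map_mul, map_zero, ← hcαd, ← hcβd, ← hcγd] at hc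
                have hc2 : cα * (x * y) + cβ * y + cγ * x = 0 := by
                  linear_combination x * y * hc - (cβ * y) * hxx - (cγ * x) * hyy
                linear_combination (cα * x + cβ) * hline - γ * hc2
              have Q1 := key a1 b1 (ee_mul_conj q₁ l₁) (ee_mul_conj q₁ l₁') e1
              have Q2 := key a2 b2 (ee_mul_conj q₂ l₂) (ee_mul_conj q₂ l₂') e2
              have Q3 := key a3 b3 (ee_mul_conj q₃ l₃) (ee_mul_conj q₃ l₃') e3
              have hA : cα * β ≠ 0 := by
                apply mul_ne_zero _ hβ0
                rw [hcαd]
                simpa using hα0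
              have s12 : cα * β * (a1 + a2) + (cα * α + cβ * β - cγ * γ) = 0 := by
                have h := mul_eq_zero.mp (show (a1 - a2) *
                    (cα * β * (a1 + a2) + (cα * α + cβ * β - cγ * γ)) = 0 by
                  linear_combination Q1 - Q2)
                rcases h with h | h
                · exact absurd (sub_eq_zero.mp h) h12a
                · exact h
              have s13 : cα * β * (a1 + a3) + (cα * α + cβ * β - cγ * γ) = 0 := by
                have h := mul_eq_zero.mp (show (a1 - a3) *
                    (cα * β * (a1 + a3) + (cα * α + cβ * β - cγ * γ)) = 0 by
                  linear_combination Q1 - Q3)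
                rcases h with h | h
                · exact absurd (sub_eq_zero.mp h) h13a
                · exact h
              have : a2 = a3 := by
                have h := mul_left_cancel₀ hA (show cα * β * a2 = cα * β * a3 by
                  linear_combination s12 - s13)
                exact h
              exact h23a this
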